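/- Let 1 ≤ q < p, let k ≤ n be positive integers, let ε > 0, and suppose the subspace X ⊆ ℝ^n is (k, ε)-ℓ_p-spread. Then Δ_{q,p}(X) ≤ (1/ε)·(n/k)^{1/q}. -/

import Mathlib

/-!
Let `y` keep only the coordinates of `x` with `|xᵢ|^q` above the average level `‖x‖_q^q / k`.
By Markov there are at most `k` of them, and every discarded coordinate satisfies
`|xᵢ|^p ≤ (‖x‖_q^q / k)^(p/q - 1) |xᵢ|^q`; summing, `‖x - y‖_p ≤ ‖x‖_q / k^(1/q - 1/p)`.
For a spread vector `ε‖x‖_p < ‖x - y‖_p`, which bounds its distortion by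
`ε⁻¹ (n/k)^(1/q - 1/p) ≤ ε⁻¹ (n/k)^(1/q)`.
-/

open Finset

noncomputable def lpNorm {ι : Type*} [Fintype ι] (p : ℝ) (x : ι → ℝ) : ℝ :=
  (∑ i, |x i| ^ p) ^ (1 / p)

/-- `x` has at most `k` nonzero coordinates. -/
def Sparse {ι : Type*} (k : ℝ) (x : ι → ℝ) : Prop :=
  ((Function.support x).ncard : ℝ) ≤ k

/-- `x` is `(k, ε)`-`ℓ_p`-compressible. -/
def Compressible {ι : Type*} [Fintype ι] (p k ε : ℝ) (x : ι → ℝ) : Prop :=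
  ∃ y : ι → ℝ, Sparse k y ∧ lpNorm p (x - y) ≤ ε * lpNorm p x

/-- A subspace is `(k, ε)`-`ℓ_p`-spread if every nonzero vector in it is not
`(k, ε)`-`ℓ_p`-compressible. -/
def SpreadSubspace {ι : Type*} [Fintype ι] (p k ε : ℝ) (X : Submodule ℝ (ι → ℝ)) : Prop :=
  ∀ x ∈ X, x ≠ 0 → ¬ Compressible p k ε x

/-- The `(ℓ_q, ℓ_p)`-distortion of a vector. -/
noncomputable def distortion {ι : Type*} [Fintype ι] (q p : ℝ) (x : ι → ℝ) : ℝ :=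
  (Fintype.card ι : ℝ) ^ (1 / q - 1 / p) * lpNorm p x / lpNorm q x

/-- The `(ℓ_q, ℓ_p)`-distortion of a subspace. -/
noncomputable def distortionSub {ι : Type*} [Fintype ι] (q p : ℝ)
    (X : Submodule ℝ (ι → ℝ)) : ℝ :=
  sSup {d | ∃ x ∈ X, x ≠ 0 ∧ d = distortion q p x}

/-- A bipartite graph, presented as the neighbor sets of the left vertices,
is `t`-left-regular. -/
def LeftRegular {n m : ℕ} (N : Fin n → Finset (Fin m)) (t : ℕ) : Prop :=
  ∀ u, (N u).card = t

/-- The neighborhood `N(S)` of a set `S` of left vertices. -/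
def nbrs {n m : ℕ} (N : Fin n → Finset (Fin m)) (S : Finset (Fin n)) : Finset (Fin m) :=
  S.biUnion N

/-- The set `U(S)` of unique neighbors of a set `S` of left vertices. -/
def uniqueNbrs {n m : ℕ} (N : Fin n → Finset (Fin m)) (S : Finset (Fin n)) : Finset (Fin m) :=
  (nbrs N S).filter (fun r => (S.filter (fun v => r ∈ N v)).card = 1)

/-- The degree of a right vertex. -/
def rightDeg {n m : ℕ} (N : Fin n → Finset (Fin m)) (r : Fin m) : ℕ :=
  (Finset.univ.filter (fun u => r ∈ N u)).card

/-- `(γ, μ)`-vertex expansion. -/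
def VertexExpander {n m : ℕ} (N : Fin n → Finset (Fin m)) (t : ℕ) (γ μ : ℝ) : Prop :=
  ∀ S : Finset (Fin n), (S.card : ℝ) ≤ γ * n →
    (t : ℝ) * (1 - μ) * S.card ≤ ((nbrs N S).card : ℝ)

/-- `(γ, μ)`-unique expansion. -/
def UniqueExpander {n m : ℕ} (N : Fin n → Finset (Fin m)) (t : ℕ) (γ μ : ℝ) : Prop :=
  ∀ S : Finset (Fin n), (S.card : ℝ) ≤ γ * n →
    (t : ℝ) * (1 - μ) * S.card ≤ ((uniqueNbrs N S).card : ℝ)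

/-- The bipartite graph `G_A` of a matrix, presented by neighbor sets of left vertices
(columns): the neighbors of `u ∈ V_L` are the rows `r` with `A r u ≠ 0`. -/
noncomputable def matNbrs {m n : ℕ} (A : Matrix (Fin m) (Fin n) ℝ) : Fin n → Finset (Fin m) :=
  fun u => Finset.univ.filter (fun r => A r u ≠ 0)

/-- `A ∈ M_{m,n,s,t}`: entries in `{0, 1, -1}`, every row has exactly `s` nonzero entries,
and every column has exactly `t` nonzero entries. -/
def Biregular {m n : ℕ} (s t : ℕ) (A : Matrix (Fin m) (Fin n) ℝ) : Prop :=
  (∀ r u, A r u = 0 ∨ A r u = 1 ∨ A r u = -1) ∧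
  (∀ r : Fin m, (Finset.univ.filter (fun u => A r u ≠ 0)).card = s) ∧
  (∀ u : Fin n, (Finset.univ.filter (fun r => A r u ≠ 0)).card = t)

/-- The bipartite graph on `V_L ⊕ V_R` associated with left-neighbor data `N`. -/
def bipGraph {n m : ℕ} (N : Fin n → Finset (Fin m)) : SimpleGraph (Fin n ⊕ Fin m) where
  Adj x y :=
    match x, y with
    | Sum.inl u, Sum.inr r => r ∈ N u
    | Sum.inr r, Sum.inl u => r ∈ N u
    | _, _ => False
  symm := ⟨by rintro (u | r) (u' | r') h <;> first | exact h.elim | exact h⟩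
  loopless := ⟨by rintro (u | r) h <;> exact h.elim⟩

/-- The ball of radius `ℓ` about `v` in a graph. -/
def graphBall {V : Type*} (G : SimpleGraph V) (v : V) (ℓ : ℕ) : Set V :=
  {w | G.Reachable v w ∧ G.dist v w ≤ ℓ}

/-- The ball of radius `ℓ` about `v` contains no cycle. -/
def BallAcyclic {V : Type*} (G : SimpleGraph V) (v : V) (ℓ : ℕ) : Prop :=
  (SimpleGraph.induce (graphBall G v ℓ) G).IsAcyclic

/-- `𝒢_{m,n,s,t}`: the set of bipartite graphs on `V_L = Fin n`, `V_R = Fin m`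
(presented by neighbor sets of left vertices) in which every left vertex has degree
exactly `t` and every right vertex has degree exactly `s`. -/
def GSet (m n s t : ℕ) : Finset (Fin n → Finset (Fin m)) :=
  Finset.univ.filter (fun N => (∀ u, (N u).card = t) ∧ (∀ r, rightDeg N r = s))

/-- The edge set `F` is contained in the edge set of the graph given by `N`. -/
def edgesSubset {n m : ℕ} (F : Finset (Fin n × Fin m)) (N : Fin n → Finset (Fin m)) : Prop :=
  ∀ e ∈ F, e.2 ∈ N e.1

/-- The `ℓ₂ → ℓ₂` operator norm of a matrix. -/
noncomputable def l2OpNorm {m n : ℕ} (A : Matrix (Fin m) (Fin n) ℝ) : ℝ :=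
  sSup {c | ∃ x : Fin n → ℝ, x ≠ 0 ∧ c = lpNorm 2 (A.mulVec x) / lpNorm 2 x}

section Truncation

variable {ι : Type*}

theorem card_filter_sum_div_lt_le [Fintype ι] {a : ι → ℝ} (ha : ∀ i, 0 ≤ a i) {k : ℝ}
    (hk : 0 < k) : ((univ.filter fun i => (∑ j, a j) / k < a i).card : ℝ) ≤ k := by
  set S := ∑ j, a j
  set T := univ.filter fun i => S / k < a i
  rcases T.eq_empty_or_nonempty with hT | ⟨i, hi⟩
  · simp [hT, hk.le]
  have hS : 0 < S / k := by
    have hai : 0 < a i :=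
      (div_nonneg (sum_nonneg fun j _ => ha j) hk.le).trans_lt (mem_filter.1 hi).2
    exact div_pos (hai.trans_le (single_le_sum (fun j _ => ha j) (mem_univ i))) hk
  refine le_of_mul_le_mul_right ?_ hS
  calc (T.card : ℝ) * (S / k) ≤ ∑ i ∈ T, a i := by
        simpa using T.card_nsmul_le_sum a (S / k) fun i hi => (mem_filter.1 hi).2.le
    _ ≤ S := sum_le_sum_of_subset_of_nonneg (subset_univ T) fun j _ _ => ha j
    _ = k * (S / k) := by field_simp

theorem sum_rpow_le_of_forall_le (s : Finset ι) {a : ι → ℝ} (ha : ∀ i, 0 ≤ a i) {r τ : ℝ}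
    (hr : 1 ≤ r) (hτ : ∀ i ∈ s, a i ≤ τ) :
    ∑ i ∈ s, a i ^ r ≤ τ ^ (r - 1) * ∑ i ∈ s, a i := by
  rw [mul_sum]
  refine sum_le_sum fun i hi => ?_
  calc a i ^ r = a i ^ (r - 1) * a i := by
        rw [← Real.rpow_add_one' (ha i) (by linarith), sub_add_cancel]
    _ ≤ τ ^ (r - 1) * a i :=
        mul_le_mul_of_nonneg_right (Real.rpow_le_rpow (ha i) (hτ i hi) (by linarith)) (ha i)

end Truncation

section Distortion

variable {ι : Type*} [Fintype ι]

theorem lpNorm_pos (q : ℝ) {x : ι → ℝ} (hx : x ≠ 0) : 0 < lpNorm q x := by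
  obtain ⟨i, hi⟩ := Function.ne_iff.1 hx
  have hxi : 0 < |x i| ^ q := Real.rpow_pos_of_pos (abs_pos.2 hi) q
  exact Real.rpow_pos_of_pos (hxi.trans_le
    (single_le_sum (f := fun j => |x j| ^ q) (fun j _ => by positivity) (mem_univ i))) _

theorem exists_sparse_lpNorm_sub_le (x : ι → ℝ) {q p k : ℝ} (hq : 0 < q) (hqp : q ≤ p)
    (hk : 0 < k) : ∃ y, Sparse k y ∧ lpNorm p (x - y) ≤ lpNorm q x / k ^ (1 / q - 1 / p) := by
  set a : ι → ℝ := fun i => |x i| ^ q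
  have ha : ∀ i, 0 ≤ a i := fun i => by positivity
  set S := ∑ i, a i
  set T := univ.filter fun i => S / k < a i
  set L := univ.filter fun i => a i ≤ S / k
  have hS : 0 ≤ S := sum_nonneg fun i _ => ha i
  refine ⟨(T : Set ι).indicator x, ?_, ?_⟩
  · calc ((Function.support ((T : Set ι).indicator x)).ncard : ℝ) ≤ T.card := by
          exact_mod_cast (Set.ncard_le_ncard Set.support_indicator_subset T.finite_toSet).trans
            (Set.ncard_coe_finset T).le
      _ ≤ k := card_filter_sum_div_lt_le ha hk
  have hp : 0 < p := hq.trans_le hqp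
  have hr : 1 ≤ p / q := (one_le_div hq).2 hqp
  have htail : ∑ i, |((T : Set ι)ᶜ.indicator x) i| ^ p = ∑ i ∈ L, a i ^ (p / q) := by
    rw [sum_filter]
    refine sum_congr rfl fun i _ => ?_
    by_cases hi : S / k < a i
    · simp [T, hi, Real.zero_rpow hp.ne']
    · simp [T, hi, a, ← Real.rpow_mul (abs_nonneg _), mul_div_cancel₀ _ hq.ne']
  rw [← Set.indicator_compl]
  calc lpNorm p ((T : Set ι)ᶜ.indicator x) = (∑ i ∈ L, a i ^ (p / q)) ^ (1 / p) := by
        rw [lpNorm, htail]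
    _ ≤ ((S / k) ^ (p / q - 1) * S) ^ (1 / p) := by
        refine Real.rpow_le_rpow (sum_nonneg fun i _ => by positivity) ?_ (by positivity)
        refine (sum_rpow_le_of_forall_le _ ha hr fun i hi => (mem_filter.1 hi).2).trans ?_
        gcongr
        exact sum_le_sum_of_subset_of_nonneg (subset_univ _) fun i _ _ => ha i
    _ = (S ^ (p / q) / k ^ (p / q - 1)) ^ (1 / p) := by
        rw [Real.div_rpow hS hk.le, div_mul_eq_mul_div,
          ← Real.rpow_add_one' hS (by linarith), sub_add_cancel]
    _ = S ^ (1 / q) / k ^ (1 / q - 1 / p) := by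
        rw [Real.div_rpow (by positivity) (by positivity), ← Real.rpow_mul hS,
          ← Real.rpow_mul hk.le]
        congr 2 <;> field_simp

theorem distortion_le_of_not_compressible {q p k ε : ℝ} (hq : 0 < q) (hqp : q ≤ p) (hk : 0 < k)
    (hε : 0 < ε) {x : ι → ℝ} (hx : x ≠ 0) (hxc : ¬ Compressible p k ε x) :
    distortion q p x ≤ ε⁻¹ * (Fintype.card ι / k) ^ (1 / q - 1 / p) := by
  obtain ⟨y, hy, hxy⟩ := exists_sparse_lpNorm_sub_le x hq hqp hk
  have hspread : ε * lpNorm p x < lpNorm p (x - y) := not_le.1 fun h => hxc ⟨y, hy, h⟩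
  have hxq := lpNorm_pos q hx
  have hP : lpNorm p x ≤ ε⁻¹ * (lpNorm q x / k ^ (1 / q - 1 / p)) := by
    rw [le_inv_mul_iff₀ hε]; exact (hspread.trans_le hxy).le
  calc distortion q p x
      ≤ (Fintype.card ι : ℝ) ^ (1 / q - 1 / p) * (ε⁻¹ * (lpNorm q x / k ^ (1 / q - 1 / p)))
          / lpNorm q x := by
        unfold distortion; gcongr
    _ = ε⁻¹ * (Fintype.card ι / k) ^ (1 / q - 1 / p) := by
        rw [Real.div_rpow (Nat.cast_nonneg _) hk.le]; field_simp

theorem distortionSub_le_of_spread {q p k ε : ℝ} (hq : 0 < q) (hqp : q ≤ p) (hk : 0 < k)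
    (hε : 0 < ε) {X : Submodule ℝ (ι → ℝ)} (hX : SpreadSubspace p k ε X) :
    distortionSub q p X ≤ ε⁻¹ * (Fintype.card ι / k) ^ (1 / q - 1 / p) := by
  refine Real.sSup_le ?_ (by positivity)
  rintro _ ⟨x, hxX, hx, rfl⟩
  exact distortion_le_of_not_compressible hq hqp hk hε hx (hX x hxX hx)

end Distortion

/-- **Spread subspaces have small distortion.** If `X ⊆ ℝ^n` is `(k, ε)`-`ℓ_p`-spread and
`1 ≤ q < p`, then `Δ_{q,p}(X) ≤ (1/ε)(n/k)^(1/q)`. -/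
theorem spread_distortion_upper {n : ℕ} (q p : ℝ) (hq : 1 ≤ q) (hqp : q < p)
    (k : ℕ) (hk : 0 < k) (hkn : k ≤ n) (ε : ℝ) (hε : 0 < ε)
    (X : Submodule ℝ (Fin n → ℝ)) (hX : SpreadSubspace p k ε X) :
    distortionSub q p X ≤ (1 / ε) * ((n : ℝ) / k) ^ (1 / q) := by
  have hk0 : (0 : ℝ) < k := Nat.cast_pos.2 hk
  have hnk : 1 ≤ (n : ℝ) / k := (one_le_div hk0).2 (Nat.cast_le.2 hkn)
  have hp : 0 ≤ 1 / p := by have := hq.trans hqp.le; positivity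
  calc distortionSub q p X ≤ ε⁻¹ * ((n : ℝ) / k) ^ (1 / q - 1 / p) := by
        simpa using distortionSub_le_of_spread (zero_lt_one.trans_le hq) hqp.le hk0 hε hX
    _ ≤ (1 / ε) * ((n : ℝ) / k) ^ (1 / q) := by
        rw [one_div ε]
        gcongr ε⁻¹ * ?_
        exact Real.rpow_le_rpow_of_exponent_le hnk (by linarith)
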